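/- arXiv:cs/0003035 — 2 statements merged into one kernel-verified Lean document; each statement's English description precedes it below -/
import Mathlib

section
/- For the self-referential preference default theory with ι = Fin 2, form 0 = (1 < 0) (i.e. the atomic sentence R(c_1, c_0)) and form 1 = (0 < 1) (i.e. R(c_0, c_1)), the set of accepted conclusions equals the deductive closure of the disjunction: lfp(C) = {φ : L.Sentence | every model of {(1 < 0) ∨ (0 < 1)} ∪ SPO satisfies φ}. -/
open FirstOrder Language

namespace Brevis

/-- The base language with a single binary relation symbol `R`. -/
def baseLang : Language where
  Functions := fun _ => Empty
  Relations := fun n => match n with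
    | 2 => Unit
    | _ => Empty

/-- The binary relation symbol `R` of `baseLang`. -/
def Rsym : baseLang.Relations 2 := Unit.unit

/-- The base language with a binary relation symbol `R` and one 0-ary relation symbol `P`. -/
def baseLangP : Language where
  Functions := fun _ => Empty
  Relations := fun n => match n with
    | 0 => Unit
    | 2 => Unit
    | _ => Empty

/-- The binary relation symbol `R` of `baseLangP`. -/
def RsymP : baseLangP.Relations 2 := Unit.unit

/-- The 0-ary relation symbol `P` of `baseLangP`. -/
def Psym : baseLangP.Relations 0 := Unit.unit

/-- The atomic sentence `p` given by the propositional symbol `P`. -/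
def pSent (ι : Type) : (baseLangP[[ι]]).Sentence :=
  Relations.formula (Sum.inl Psym) ![]

variable (L₀ : FirstOrder.Language.{0, 0}) (R : L₀.Relations 2) (ι : Type) [Fintype ι]

/-- The atomic sentence `d < d'`, i.e. `R (c_d) (c_d')`. -/
def ltSent (d d' : ι) : (L₀[[ι]]).Sentence :=
  Relations.boundedFormula₂ (Sum.inl R) (L₀.con d).term (L₀.con d').term

/-- The theory `SPO` asserting that `R` is a strict partial order (irreflexive and transitive). -/
def spo : (L₀[[ι]]).Theory :=
  {Relations.irreflexive (Sum.inl R), Relations.transitive (Sum.inl R)}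

/-- A set of sentences is consistent iff together with `SPO` it is satisfiable. -/
def Consistent (S : (L₀[[ι]]).Theory) : Prop :=
  Theory.IsSatisfiable (S ∪ spo L₀ R ι)

open scoped Classical in
/-- The extension base `B(e)` determined by the linear order `e` on the names. -/
noncomputable def base (e : LinearOrder ι) (form : ι → (L₀[[ι]]).Sentence) :
    (L₀[[ι]]).Theory :=
  letI := e
  (Finset.univ.sort (· ≤ · : ι → ι → Prop)).foldl
    (fun B d => if Consistent L₀ R ι (B ∪ {form d}) then B ∪ {form d} else B) ∅

/-- The deductive closure (modulo `SPO`) of a set of sentences: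
all sentences satisfied in every model of `S ∪ SPO`. -/
def closure (S : (L₀[[ι]]).Theory) : Set (L₀[[ι]]).Sentence :=
  {φ | (S ∪ spo L₀ R ι) ⊨ᵇ φ}

/-- The extension `E(e)` generated by the linear order `e`. -/
noncomputable def extension (e : LinearOrder ι) (form : ι → (L₀[[ι]]).Sentence) :
    Set (L₀[[ι]]).Sentence :=
  closure L₀ R ι (base L₀ R ι e form)

/-- A strict partial order `p` on the names is compatible with `S` iff
`S ∪ SPO ∪ {d < d' | p d d'} ∪ {¬ (d < d') | ¬ p d d'}` is satisfiable. -/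
def Compatible (p : ι → ι → Prop) (S : (L₀[[ι]]).Theory) : Prop :=
  Theory.IsSatisfiable
    (S ∪ spo L₀ R ι ∪ {φ | ∃ d d', p d d' ∧ φ = ltSent L₀ R ι d d'} ∪
      {φ | ∃ d d', ¬ p d d' ∧ φ = ∼(ltSent L₀ R ι d d')})

/-- `Exts form S`: the set of extensions `E(e)` where `e` is a linear order extending some
strict partial order compatible with `S`. -/
def Exts (form : ι → (L₀[[ι]]).Sentence) (S : (L₀[[ι]]).Theory) :
    Set (Set (L₀[[ι]]).Sentence) :=
  {E | ∃ (e : LinearOrder ι) (p : ι → ι → Prop), IsStrictOrder ι p ∧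
    Compatible L₀ R ι p S ∧ (∀ d d', p d d' → e.lt d d') ∧ E = extension L₀ R ι e form}

/-- The operator `C`. -/
def C (form : ι → (L₀[[ι]]).Sentence) (S : (L₀[[ι]]).Theory) : (L₀[[ι]]).Theory :=
  ⋂₀ Exts L₀ R ι form S

/-- The least fixed point of `C` (Knaster–Tarski): the set of accepted conclusions. -/
def lfpC (form : ι → (L₀[[ι]]).Sentence) : (L₀[[ι]]).Theory :=
  sInf {S | C L₀ R ι form S ⊆ S}

/-!
Whichever default comes first in `e` is consistent on its own and blocks the other one, since a
strict order cannot relate `0` and `1` in both directions. So every extension is `Cn(1 < 0)` or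
`Cn(0 < 1)`, and both contain `D = Cn((1 < 0) ∨ (0 < 1))`; hence `D ⊆ C S` for every `S`, and `D`
lies below the least fixed point. Conversely, each of the two orders `0 ≺ 1`, `1 ≺ 0` is compatible
with `D`, as witnessed by the two-element model in which `R` is exactly that edge. Thus
`C D = Cn(1 < 0) ∩ Cn(0 < 1) = D`, so `D` is a prefixed point and contains the least one.
-/

end Brevis

namespace Brevis

open Theory Structure

section Semantics

variable {L₀ : FirstOrder.Language.{0, 0}} {R : L₀.Relations 2} {ι : Type}

theorem model_spo_iff {M : Type*} [L₀[[ι]].Structure M] :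
    M ⊨ spo L₀ R ι ↔ IsStrictOrder M fun x y => RelMap (L := L₀[[ι]]) (Sum.inl R) ![x, y] := by
  simp only [spo, model_insert_iff, model_singleton_iff]
  refine ⟨fun ⟨hi, ht⟩ => ?_, fun h => ⟨?_, ?_⟩⟩
  · have := Relations.realize_irreflexive.1 hi
    have := Relations.realize_transitive.1 ht
    exact {}
  · exact Relations.realize_irreflexive.2 inferInstance
  · exact Relations.realize_transitive.2 inferInstance

theorem realize_ltSent {M : Type*} [L₀[[ι]].Structure M] (d d' : ι) :
    M ⊨ ltSent L₀ R ι d d' ↔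
      RelMap (L := L₀[[ι]]) (Sum.inl R) ![(L₀.con d : M), (L₀.con d' : M)] := by
  refine (BoundedFormula.realize_rel₂ (L := L₀[[ι]]) (R := Sum.inl R)).trans ?_
  simp only [Term.realize_constants]

theorem not_consistent_ltSent_pair (d d' : ι) :
    ¬ Consistent L₀ R ι ({ltSent L₀ R ι d d'} ∪ {ltSent L₀ R ι d' d}) := by
  rintro ⟨M⟩
  obtain ⟨hS, hspo⟩ := model_union_iff.1 M.is_model
  obtain ⟨h, h'⟩ := model_union_iff.1 hS
  have := model_spo_iff.1 hspo
  exact irrefl_of (fun x y : M => RelMap (L := L₀[[ι]]) (Sum.inl R) ![x, y]) _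
    (trans_of (fun x y : M => RelMap (L := L₀[[ι]]) (Sum.inl R) ![x, y])
      ((realize_ltSent d d').1 (model_singleton_iff.1 h))
      ((realize_ltSent d' d).1 (model_singleton_iff.1 h')))

theorem model_closure {M : Type} [L₀[[ι]].Structure M] [Nonempty M] {T : L₀[[ι]].Theory}
    (h : M ⊨ T ∪ spo L₀ R ι) : M ⊨ closure L₀ R ι T :=
  haveI := h; ⟨fun _ hφ => ModelsBoundedFormula.realize_sentence hφ M⟩

theorem mem_closure_iff {T : L₀[[ι]].Theory} {χ : L₀[[ι]].Sentence} :
    χ ∈ closure L₀ R ι T ↔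
      ∀ (M : Type) [L₀[[ι]].Structure M] [Nonempty M], M ⊨ T ∪ spo L₀ R ι → M ⊨ χ :=
  ⟨fun h _ _ _ hM => (model_closure hM).realize_of_mem χ h,
    fun h => models_sentence_iff.2 fun M => h M M.is_model⟩

theorem closure_sup (φ ψ : L₀[[ι]].Sentence) :
    closure L₀ R ι {φ ⊔ ψ} = closure L₀ R ι {φ} ∩ closure L₀ R ι {ψ} := by
  ext χ
  simp only [Set.mem_inter_iff, mem_closure_iff, model_union_iff, model_singleton_iff,
    Sentence.realize_sup]
  constructor
  · intro h
    exact ⟨fun M _ _ hM => h M ⟨Or.inl hM.1, hM.2⟩, fun M _ _ hM => h M ⟨Or.inr hM.1, hM.2⟩⟩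
  · rintro ⟨hφ, hψ⟩ M _ _ ⟨hφψ | hφψ, hspo⟩
    exacts [hφ M ⟨hφψ, hspo⟩, hψ M ⟨hφψ, hspo⟩]

theorem subset_lfpC_of_subset_extension [Fintype ι] {form : ι → L₀[[ι]].Sentence}
    {D : L₀[[ι]].Theory} (h : ∀ e, D ⊆ extension L₀ R ι e form) : D ⊆ lfpC L₀ R ι form := by
  refine le_sInf fun S hS => subset_trans (Set.subset_sInter fun E hE => ?_) hS
  obtain ⟨e, -, -, -, -, rfl⟩ := hE
  exact h e

theorem base_eq_singleton_of_two [Fintype ι] {e : LinearOrder ι}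
    {form : ι → L₀[[ι]].Sentence} {a b : ι} (hab : e.lt a b) (huniv : ∀ x, x = a ∨ x = b)
    (ha : Consistent L₀ R ι {form a}) (hb : ¬ Consistent L₀ R ι ({form a} ∪ {form b})) :
    base L₀ R ι e form = {form a} := by
  let := e
  have hsort : Finset.univ.sort (· ≤ · : ι → ι → Prop) = [a, b] := by
    have huniv' : (Finset.univ : Finset ι) = {a, b} := by
      ext x; simpa using huniv x
    rw [huniv', Finset.sort_insert _ (by simpa using le_of_lt hab) (by simpa using ne_of_lt hab),
      Finset.sort_singleton]
  rw [base, hsort]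
  simp only [List.foldl_cons, List.foldl_nil]
  rw [Set.empty_union, if_pos ha, if_neg hb]

end Semantics

theorem exists_linearOrder_lt {ι : Type*} {a b : ι} (h : a ≠ b) :
    ∃ e : LinearOrder ι, e.lt a b := by
  have e : LinearOrder ι := WellOrderingRel.isWellOrder.linearOrder
  rcases lt_or_gt_of_ne h with h | h
  exacts [⟨e, h⟩, ⟨inferInstanceAs (LinearOrder ιᵒᵈ), h⟩]

/-- A copy of `ι`; the relation only selects the structure below (`R` is `r`, `c_d` is `d`). -/
def RelModel {ι : Type} (_r : ι → ι → Prop) : Type := ι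

def edge {ι : Type} (a b : ι) : ι → ι → Prop := fun x y => x = a ∧ y = b

section RelModel

variable {ι : Type} (r : ι → ι → Prop)

instance : baseLang.Structure (RelModel r) where
  funMap f := Empty.elim f
  RelMap {n} :=
    match n with
    | 2 => fun _ v => r (v 0) (v 1)
    | 0 | 1 | _ + 3 => fun R _ => R.elim

instance [h : Nonempty ι] : Nonempty (RelModel r) := h

instance : baseLang[[ι]].Structure (RelModel r) :=
  letI : (constantsOn ι).Structure (RelModel r) := constantsOn.structure id
  Language.sumStructure _ _ _

variable {r}

theorem RelModel.realize_ltSent (d d' : ι) :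
    RelModel r ⊨ ltSent baseLang Rsym ι d d' ↔ r d d' :=
  Brevis.realize_ltSent d d'

theorem RelModel.model_spo (hr : IsStrictOrder ι r) : RelModel r ⊨ spo baseLang Rsym ι :=
  model_spo_iff.2 hr

end RelModel

theorem isStrictOrder_edge {ι : Type} {a b : ι} (h : a ≠ b) : IsStrictOrder ι (edge a b) where
  irrefl _ hx := h (hx.1.symm.trans hx.2)
  trans _ _ _ hxy hyz := absurd (hxy.2.symm.trans hyz.1) h.symm

section BaseLang

variable {ι : Type}

theorem consistent_ltSent {d d' : ι} (h : d ≠ d') :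
    Consistent baseLang Rsym ι {ltSent baseLang Rsym ι d d'} :=
  have : Nonempty ι := ⟨d⟩
  have : RelModel (edge d d') ⊨ {ltSent baseLang Rsym ι d d'} ∪ spo baseLang Rsym ι :=
    model_union_iff.2 ⟨model_singleton_iff.2 ((RelModel.realize_ltSent d d').2 ⟨rfl, rfl⟩),
      RelModel.model_spo (isStrictOrder_edge h)⟩
  Model.isSatisfiable (RelModel (edge d d'))

theorem compatible_closure [Nonempty ι] {p : ι → ι → Prop} (hp : IsStrictOrder ι p)
    {T : baseLang[[ι]].Theory} (hT : RelModel p ⊨ T) :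
    Compatible baseLang Rsym ι p (closure baseLang Rsym ι T) := by
  have hspo := RelModel.model_spo hp
  have : RelModel p ⊨ closure baseLang Rsym ι T ∪ spo baseLang Rsym ι ∪
      {φ | ∃ d d', p d d' ∧ φ = ltSent baseLang Rsym ι d d'} ∪
      {φ | ∃ d d', ¬ p d d' ∧ φ = ∼(ltSent baseLang Rsym ι d d')} := by
    refine model_union_iff.2 ⟨model_union_iff.2 ⟨model_union_iff.2
      ⟨model_closure (model_union_iff.2 ⟨hT, hspo⟩), hspo⟩, (model_iff _).2 ?_⟩, (model_iff _).2 ?_⟩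
    · rintro _ ⟨d, d', h, rfl⟩
      exact (RelModel.realize_ltSent d d').2 h
    · rintro _ ⟨d, d', h, rfl⟩
      exact (Sentence.realize_not _).2 fun h' => h ((RelModel.realize_ltSent d d').1 h')
  exact Model.isSatisfiable (RelModel p)

end BaseLang

abbrev selfRef : Fin 2 → baseLang[[Fin 2]].Sentence :=
  ![ltSent baseLang Rsym (Fin 2) 1 0, ltSent baseLang Rsym (Fin 2) 0 1]

theorem consistent_selfRef (a : Fin 2) : Consistent baseLang Rsym (Fin 2) {selfRef a} := by
  fin_cases a <;> exact consistent_ltSent (by decide)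

theorem not_consistent_selfRef_pair {a b : Fin 2} (h : a ≠ b) :
    ¬ Consistent baseLang Rsym (Fin 2) ({selfRef a} ∪ {selfRef b}) := by
  fin_cases a <;> fin_cases b
  all_goals first | exact absurd rfl h | exact not_consistent_ltSent_pair _ _

theorem extension_selfRef_of_lt {e : LinearOrder (Fin 2)} {a b : Fin 2} (h : e.lt a b) :
    extension baseLang Rsym (Fin 2) e selfRef = closure baseLang Rsym (Fin 2) {selfRef a} := by
  have hab : a ≠ b := @ne_of_lt _ e.toPreorder _ _ h
  have huniv (x : Fin 2) : x = a ∨ x = b := by clear h; omega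
  rw [extension, base_eq_singleton_of_two h huniv (consistent_selfRef a)
    (not_consistent_selfRef_pair hab)]

theorem exists_extension_selfRef_eq (e : LinearOrder (Fin 2)) :
    ∃ a, extension baseLang Rsym (Fin 2) e selfRef = closure baseLang Rsym (Fin 2) {selfRef a} := by
  rcases @lt_or_gt_of_ne _ e 0 1 (by decide) with h | h
  exacts [⟨0, extension_selfRef_of_lt h⟩, ⟨1, extension_selfRef_of_lt h⟩]

theorem closure_selfRef_mem_Exts (a : Fin 2) :
    closure baseLang Rsym (Fin 2) {selfRef a} ∈
      Exts baseLang Rsym (Fin 2) selfRef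
        (closure baseLang Rsym (Fin 2) {selfRef 0 ⊔ selfRef 1}) := by
  obtain ⟨b, hba⟩ := exists_ne a
  obtain ⟨e, he⟩ := exists_linearOrder_lt hba.symm
  have hsup : RelModel (edge a b) ⊨ ({selfRef 0 ⊔ selfRef 1} : baseLang[[Fin 2]].Theory) := by
    rw [model_singleton_iff, Sentence.realize_sup]
    change RelModel _ ⊨ ltSent baseLang Rsym (Fin 2) 1 0 ∨
      RelModel _ ⊨ ltSent baseLang Rsym (Fin 2) 0 1
    rw [RelModel.realize_ltSent, RelModel.realize_ltSent]
    clear he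
    unfold edge
    omega
  have hp := isStrictOrder_edge hba.symm
  exact ⟨e, edge a b, hp, compatible_closure hp hsup, fun _ _ ⟨hx, hy⟩ => hx ▸ hy ▸ he,
    (extension_selfRef_of_lt he).symm⟩

/-- For the self-referential theory, the accepted conclusions are exactly the consequences of
the disjunction `(1 < 0) ∨ (0 < 1)`. -/
theorem selfref_accepted_conclusions :
    lfpC baseLang Rsym (Fin 2)
        ![ltSent baseLang Rsym (Fin 2) 1 0, ltSent baseLang Rsym (Fin 2) 0 1] =
      closure baseLang Rsym (Fin 2)
        {ltSent baseLang Rsym (Fin 2) 1 0 ⊔ ltSent baseLang Rsym (Fin 2) 0 1} := by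
  have hD := closure_sup (R := Rsym) (ltSent baseLang Rsym (Fin 2) 1 0)
    (ltSent baseLang Rsym (Fin 2) 0 1)
  apply subset_antisymm
  · refine sInf_le (show C baseLang Rsym (Fin 2) selfRef _ ⊆ _ from ?_)
    exact (Set.subset_inter (Set.sInter_subset_of_mem (closure_selfRef_mem_Exts 0))
      (Set.sInter_subset_of_mem (closure_selfRef_mem_Exts 1))).trans hD.ge
  · refine subset_lfpC_of_subset_extension fun e => ?_
    obtain ⟨a, ha⟩ := exists_extension_selfRef_eq e
    rw [ha, hD]
    fin_cases a
    exacts [Set.inter_subset_left, Set.inter_subset_right]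

end Brevis
end

section
/- Counterexample to AGM postulate (T*3), revised side: for the preference default theory with ι = Fin 3 (in the language enlarged with P), form 0 = p, form 1 = ¬p, and form 2 = (0 < 1) (i.e. R(c_0, c_1)), the sentence p is an accepted conclusion: p ∈ lfp(C). -/
open FirstOrder Language

/-!
The sentence `0 < 1` is consistent with every consistent subset of `{p, ¬p, 0 < 1}`, so it lies
in every extension, hence in every prefixed point `S` of `C`. Once `0 < 1 ∈ S`, every strict order
compatible with `S` puts `0` below `1`; so in every admissible linear order `p` is processed
before `¬p`, enters the extension base, and `p ∈ C(S) ⊆ S`.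
-/

namespace Brevis

variable {L₀ : FirstOrder.Language.{0, 0}} {R : L₀.Relations 2} {ι : Type}

theorem consistent_empty : Consistent L₀ R ι ∅ := by
  let _ : (L₀[[ι]]).Structure Unit := ⟨fun _ _ => (), fun _ _ => False⟩
  have : Unit ⊨ spo L₀ R ι := ⟨fun φ hφ => by
    rcases hφ with rfl | rfl
    · exact Relations.realize_irreflexive.2 ⟨fun _ h => h⟩
    · exact Relations.realize_transitive.2 ⟨fun _ _ _ h _ => h⟩⟩
  rw [Consistent, Set.empty_union]
  exact ⟨Theory.ModelType.of _ Unit⟩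

theorem Consistent.neg_notMem {S : (L₀[[ι]]).Theory} (hS : Consistent L₀ R ι S)
    {φ : (L₀[[ι]]).Sentence} (hφ : φ ∈ S) : ∼φ ∉ S := fun hnφ => by
  obtain ⟨M⟩ := hS
  exact (Sentence.realize_not M).1 (M.is_model.realize_of_mem _ (Or.inl hnφ))
    (M.is_model.realize_of_mem _ (Or.inl hφ))

section BaseStep

variable (R) (form : ι → (L₀[[ι]]).Sentence)

open scoped Classical in
/-- One step `B_{i-1} ↦ B_i` of the construction of the extension base. -/
noncomputable def baseStep (B : (L₀[[ι]]).Theory) (d : ι) : (L₀[[ι]]).Theory :=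
  if Consistent L₀ R ι (B ∪ {form d}) then B ∪ {form d} else B

variable {R form}

theorem subset_baseStep (B : (L₀[[ι]]).Theory) (d : ι) : B ⊆ baseStep R form B d := by
  unfold baseStep
  split_ifs
  exacts [Set.subset_union_left, subset_rfl]

theorem mem_baseStep_of_consistent {B : (L₀[[ι]]).Theory} {d : ι}
    (h : Consistent L₀ R ι (B ∪ {form d})) : form d ∈ baseStep R form B d := by
  rw [baseStep, if_pos h]
  exact Or.inr rfl

theorem consistent_baseStep {B : (L₀[[ι]]).Theory} (hB : Consistent L₀ R ι B) (d : ι) :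
    Consistent L₀ R ι (baseStep R form B d) := by
  unfold baseStep
  split_ifs with h
  exacts [h, hB]

theorem subset_foldl_baseStep :
    ∀ (l : List ι) (B : (L₀[[ι]]).Theory), B ⊆ l.foldl (baseStep R form) B
  | [], _ => subset_rfl
  | d :: l, B => (subset_baseStep B d).trans (subset_foldl_baseStep l _)

theorem foldl_baseStep_subset : ∀ (l : List ι) (B : (L₀[[ι]]).Theory),
    l.foldl (baseStep R form) B ⊆ B ∪ form '' {d | d ∈ l}
  | [], B => by simp
  | d :: l, B => by
    refine (foldl_baseStep_subset l _).trans (Set.union_subset ?_ ?_)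
    · unfold baseStep
      split_ifs
      · exact Set.union_subset_union_right _ (by simp)
      · exact Set.subset_union_left
    · exact Set.subset_union_of_subset_right
        (Set.image_mono fun _ h => List.mem_cons_of_mem d h) _

theorem consistent_foldl_baseStep : ∀ (l : List ι) {B : (L₀[[ι]]).Theory},
    Consistent L₀ R ι B → Consistent L₀ R ι (l.foldl (baseStep R form) B)
  | [], _, hB => hB
  | d :: l, _, hB => consistent_foldl_baseStep l (consistent_baseStep hB d)

end BaseStep

/-- The base built before `d` is a consistent subset of the formulas of names preceding `d`. -/
theorem mem_base_of_forall_consistent [Fintype ι] (e : LinearOrder ι)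
    (form : ι → (L₀[[ι]]).Sentence) (d : ι)
    (h : ∀ T ⊆ form '' {d' | e.lt d' d}, Consistent L₀ R ι T →
      Consistent L₀ R ι (T ∪ {form d})) :
    form d ∈ base L₀ R ι e form := by
  let _ := e
  obtain ⟨a, c, hl⟩ := List.append_of_mem (Finset.mem_sort (· ≤ ·) |>.2 (Finset.mem_univ d))
  have hsorted := (Finset.sortedLT_sort (Finset.univ : Finset ι)).pairwise
  rw [hl, List.pairwise_append] at hsorted
  have ha : {d' | d' ∈ a} ⊆ {d' | d' < d} := fun d' hd' =>
    hsorted.2.2 d' hd' d List.mem_cons_self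
  change form d ∈ (Finset.univ.sort (· ≤ ·)).foldl (baseStep R form) ∅
  rw [hl, List.foldl_append, List.foldl_cons]
  refine subset_foldl_baseStep _ _ (mem_baseStep_of_consistent (h _ ?_ ?_))
  · exact (foldl_baseStep_subset a ∅).trans (by simpa using Set.image_mono ha)
  · exact consistent_foldl_baseStep a consistent_empty

theorem mem_extension_of_mem_base [Fintype ι] {e : LinearOrder ι}
    {form : ι → (L₀[[ι]]).Sentence} {φ : (L₀[[ι]]).Sentence} (h : φ ∈ base L₀ R ι e form) :
    φ ∈ extension L₀ R ι e form :=
  Theory.models_sentence_of_mem (Or.inl h)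

theorem Compatible.rel_of_ltSent_mem {p : ι → ι → Prop} {S : (L₀[[ι]]).Theory}
    (hp : Compatible L₀ R ι p S) {d d' : ι} (h : ltSent L₀ R ι d d' ∈ S) : p d d' := by
  by_contra hn
  obtain ⟨M⟩ := hp
  exact (Sentence.realize_not M).1 (M.is_model.realize_of_mem _ (Or.inr ⟨d, d', hn, rfl⟩))
    (M.is_model.realize_of_mem _ (Or.inl (Or.inl (Or.inl h))))

theorem mem_C_of_forall_mem_base [Fintype ι] {form : ι → (L₀[[ι]]).Sentence}
    {S : (L₀[[ι]]).Theory} {φ : (L₀[[ι]]).Sentence}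
    (h : ∀ (e : LinearOrder ι) (p : ι → ι → Prop), Compatible L₀ R ι p S →
      (∀ d d', p d d' → e.lt d d') → φ ∈ base L₀ R ι e form) :
    φ ∈ C L₀ R ι form S := by
  rintro _ ⟨e, p, -, hp, hpe, rfl⟩
  exact mem_extension_of_mem_base (h e p hp hpe)

def OrderModel (ι : Type) (_b : Prop) : Type := ι

section OrderModel

variable {ι : Type} [Preorder ι] {b : Prop}

instance : (baseLangP[[ι]]).Structure (OrderModel ι b) :=
  letI : baseLangP.Structure ι :=
    ⟨fun f => f.elim, fun {n} r => match n, r with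
      | 0, _ => fun _ => b
      | 2, _ => fun v => v 0 < v 1⟩
  letI : (constantsOn ι).Structure ι := constantsOn.structure id
  Language.sumStructure _ _ ι

theorem OrderModel.realize_pSent : OrderModel ι b ⊨ pSent ι ↔ b := Iff.rfl

theorem OrderModel.realize_ltSent {d d' : ι} :
    OrderModel ι b ⊨ ltSent baseLangP RsymP ι d d' ↔ d < d' := Iff.rfl

theorem OrderModel.consistent [Nonempty ι] {T : (baseLangP[[ι]]).Theory}
    (hT : ∀ φ ∈ T, OrderModel ι b ⊨ φ) : Consistent baseLangP RsymP ι T := by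
  have : Nonempty (OrderModel ι b) := ‹Nonempty ι›
  have : OrderModel ι b ⊨ T ∪ spo baseLangP RsymP ι := ⟨fun φ hφ => by
    rcases hφ with hφ | rfl | rfl
    · exact hT φ hφ
    · exact Relations.realize_irreflexive.2 ⟨@lt_irrefl ι _⟩
    · exact Relations.realize_transitive.2 ⟨@lt_trans ι _⟩⟩
  exact ⟨Theory.ModelType.of _ (OrderModel ι b)⟩

end OrderModel

theorem ltSent_mem_base (e : LinearOrder (Fin 3)) :
    ltSent baseLangP RsymP (Fin 3) 0 1 ∈ base baseLangP RsymP (Fin 3) e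
      ![pSent (Fin 3), ∼(pSent (Fin 3)), ltSent baseLangP RsymP (Fin 3) 0 1] := by
  refine mem_base_of_forall_consistent e _ 2 fun T hT hTc => ?_
  refine OrderModel.consistent (b := pSent (Fin 3) ∈ T) fun φ hφ => ?_
  rcases hφ with hφ | rfl
  · obtain ⟨d, -, rfl⟩ := hT hφ
    fin_cases d
    · exact OrderModel.realize_pSent.2 hφ
    · exact (Sentence.realize_not _).2 fun hp =>
        hTc.neg_notMem (OrderModel.realize_pSent.1 hp) hφ
    · exact OrderModel.realize_ltSent.2 (by decide)
  · exact OrderModel.realize_ltSent.2 (by decide)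

theorem pSent_mem_base (e : LinearOrder (Fin 3)) (h01 : e.lt 0 1) :
    pSent (Fin 3) ∈ base baseLangP RsymP (Fin 3) e
      ![pSent (Fin 3), ∼(pSent (Fin 3)), ltSent baseLangP RsymP (Fin 3) 0 1] := by
  refine mem_base_of_forall_consistent e _ 0 fun T hT _ => ?_
  refine OrderModel.consistent (b := True) fun φ hφ => ?_
  rcases hφ with hφ | rfl
  · obtain ⟨d, hd, rfl⟩ := hT hφ
    fin_cases d
    · exact (@lt_irrefl _ e.toPreorder 0 hd).elim
    · exact (@lt_asymm _ e.toPreorder _ _ h01 hd).elim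
    · exact OrderModel.realize_ltSent.2 (by decide)
  · exact OrderModel.realize_pSent.2 trivial

/-- Counterexample to (T*3), revised side: for the theory `{p, ¬p, 0 < 1}`,
`p` is an accepted conclusion. -/
theorem counterexample_T3_revised :
    pSent (Fin 3) ∈ lfpC baseLangP RsymP (Fin 3)
      ![pSent (Fin 3), ∼(pSent (Fin 3)), ltSent baseLangP RsymP (Fin 3) 0 1] := by
  rw [lfpC, Set.sInf_eq_sInter, Set.mem_sInter]
  intro S (hS : C _ _ _ _ S ⊆ S)
  have hlt : ltSent baseLangP RsymP (Fin 3) 0 1 ∈ S :=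
    hS (mem_C_of_forall_mem_base fun e _ _ _ => ltSent_mem_base e)
  exact hS (mem_C_of_forall_mem_base fun e _ hp hpe =>
    pSent_mem_base e (hpe 0 1 (hp.rel_of_ltSent_mem hlt)))

end Brevis
end
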